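/- arXiv:2303.01719 — 2 statements merged into one kernel-verified Lean document; each statement's English description precedes it below -/
import Mathlib

section
/- Let T : V → V be a linear isomorphism such that for every i ∈ [s] and every v_i ∈ V_i, T(v_i) = u_i + γ_i with u_i ∈ V_i, γ_i ∈ V_{⟨i⟩*}, and W_i(v_i) = W_i(u_i). Then T is a linear isometry of (V, d_{w,(P,π)}). -/
attribute [local instance] Classical.propDecidable

noncomputable section

variable {ι F : Type*}

section Defs
variable [Fintype ι] [PartialOrder ι] [Field F] [Fintype F] {k : ι → ℕ}

/-- block support -/
def suppB (u : ∀ i, Fin (k i) → F) : Finset ι :=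
  Finset.univ.filter fun i => u i ≠ 0

/-- order ideal generated by the block support -/
def idealOf (u : ∀ i, Fin (k i) → F) : Finset ι :=
  Finset.univ.filter fun i => ∃ j ∈ suppB u, i ≤ j

/-- maximal elements of the ideal generated by the support -/
def maxOf (u : ∀ i, Fin (k i) → F) : Finset ι :=
  (idealOf u).filter fun i => ∀ j ∈ idealOf u, i ≤ j → i = j

/-- maximal weight of a block -/
def Wblk (w : F → ℕ) (u : ∀ i, Fin (k i) → F) (i : ι) : ℕ :=
  Finset.univ.sup fun j => w (u i j)

/-- maximal value of the weight -/
def Mw (w : F → ℕ) : ℕ := Finset.univ.sup w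

/-- minimal value of the weight on nonzero elements -/
def mw (w : F → ℕ) : ℕ := sInf (w '' {a | a ≠ 0})

/-- the weighted poset block weight -/
def omegaW (w : F → ℕ) (u : ∀ i, Fin (k i) → F) : ℕ :=
  (∑ i ∈ maxOf u, Wblk w u i) + (idealOf u \ maxOf u).card * Mw w

/-- principal ideal generated by `i` -/
def pIdeal (i : ι) : Finset ι := Finset.univ.filter fun j => j ≤ i

end Defs


/-- Membership in the subgroup `𝒯`: `T` maps each `v_i ∈ V_i` to `u_i + γ_i` with
`u_i ∈ V_i`, `γ_i ∈ V_{⟨i⟩*}` and `W_i(v_i) = W_i(u_i)`. -/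
def InT [Fintype ι] [PartialOrder ι] [Field F] [Fintype F] {k : ι → ℕ}
    (w : F → ℕ) (T : (∀ i, Fin (k i) → F) →ₗ[F] (∀ i, Fin (k i) → F)) : Prop :=
  ∀ (i : ι) (v : ∀ i, Fin (k i) → F), suppB v ⊆ {i} →
    ∃ u γ : ∀ i, Fin (k i) → F, T v = u + γ ∧ suppB u ⊆ {i} ∧
      (∀ l ∈ suppB γ, l < i) ∧ Wblk w v i = Wblk w u i

section Aux
variable [Fintype ι] [PartialOrder ι] [Field F] [Fintype F] {k : ι → ℕ}

def blockProj (i : ι) (u : ∀ i, Fin (k i) → F) : ∀ j, Fin (k j) → F :=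
  fun j => if j = i then u j else 0

lemma mem_suppB {u : ∀ i, Fin (k i) → F} {i : ι} : i ∈ suppB u ↔ u i ≠ 0 := by
  simp [suppB]

lemma mem_idealOf {u : ∀ i, Fin (k i) → F} {i : ι} :
    i ∈ idealOf u ↔ ∃ j ∈ suppB u, i ≤ j := by
  simp [idealOf]

lemma suppB_subset_idealOf (u : ∀ i, Fin (k i) → F) : suppB u ⊆ idealOf u :=
  fun i hi => mem_idealOf.2 ⟨i, hi, le_refl i⟩

lemma sum_blockProj (u : ∀ i, Fin (k i) → F) :
    ∑ i : ι, blockProj i u = u := by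
  funext j
  rw [Finset.sum_apply]
  simp [blockProj]

lemma suppB_blockProj (i : ι) (u : ∀ i, Fin (k i) → F) :
    suppB (blockProj i u) ⊆ {i} := by
  intro l hl
  rw [mem_suppB] at hl
  simp only [blockProj] at hl
  by_cases h : l = i <;> simp [h] at hl ⊢

lemma blockProj_eq_zero {i : ι} {u : ∀ i, Fin (k i) → F} (h : u i = 0) :
    blockProj i u = 0 := by
  funext j
  by_cases hj : j = i <;> simp [blockProj, hj]
  subst hj; simp [h]

lemma Wblk_congr {w : F → ℕ} {x y : ∀ i, Fin (k i) → F} {i : ι} (h : x i = y i) :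
    Wblk w x i = Wblk w y i := by
  simp [Wblk, h]

lemma Wblk_le_Mw (w : F → ℕ) (u : ∀ i, Fin (k i) → F) (i : ι) :
    Wblk w u i ≤ Mw w :=
  Finset.sup_le fun j _ => Finset.le_sup (Finset.mem_univ _)

/-- omegaW as a single sum over the ideal. -/
lemma omegaW_eq_sum (w : F → ℕ) (u : ∀ i, Fin (k i) → F) :
    omegaW w u = ∑ i ∈ idealOf u, (if i ∈ maxOf u then Wblk w u i else Mw w) := by
  have hsub : maxOf u ⊆ idealOf u := Finset.filter_subset _ _
  rw [← Finset.sum_sdiff hsub]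
  have h1 : ∑ i ∈ idealOf u \ maxOf u, (if i ∈ maxOf u then Wblk w u i else Mw w)
      = (idealOf u \ maxOf u).card * Mw w := by
    rw [Finset.sum_ite_of_false, Finset.sum_const, smul_eq_mul]
    intro i hi
    exact (Finset.mem_sdiff.1 hi).2
  have h2 : ∑ i ∈ maxOf u, (if i ∈ maxOf u then Wblk w u i else Mw w)
      = ∑ i ∈ maxOf u, Wblk w u i := by
    exact Finset.sum_ite_of_true (fun i hi => hi) _ _
  rw [h1, h2, omegaW, Nat.add_comm]

end Aux

section Key
variable [Fintype ι] [PartialOrder ι] [Field F] [Fintype F] {k : ι → ℕ}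

lemma key (w : F → ℕ) (T : (∀ i, Fin (k i) → F) →ₗ[F] (∀ i, Fin (k i) → F))
    (hT : InT w T) (u : ∀ i, Fin (k i) → F) :
    suppB (T u) ⊆ idealOf u ∧ ∀ i ∈ maxOf u, Wblk w (T u) i = Wblk w u i := by
  choose U G hTU hUs hGs hW using fun j => hT j (blockProj j u) (suppB_blockProj j u)
  have hTu : T u = ∑ j : ι, (U j + G j) := by
    conv_lhs => rw [← sum_blockProj u]
    rw [map_sum]
    exact Finset.sum_congr rfl fun j _ => hTU j
  -- U j vanishes on blocks other than j
  have hUz : ∀ j l : ι, l ≠ j → U j l = 0 := by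
    intro j l hlj
    by_contra h
    have := hUs j (mem_suppB.2 h)
    simp at this
    exact hlj this
  -- if `u j = 0` then `G j = 0` and `U j = 0`
  have hzero : ∀ j : ι, u j = 0 → U j + G j = 0 := by
    intro j hj
    rw [← hTU j, blockProj_eq_zero hj, map_zero]
  constructor
  · intro l hl
    rw [mem_suppB] at hl
    have hl' : (∑ j : ι, (U j + G j)) l ≠ 0 := by rw [← hTu]; exact hl
    rw [Finset.sum_apply] at hl'
    obtain ⟨j, _, hj⟩ := Finset.exists_ne_zero_of_sum_ne_zero hl'
    have hj' : U j l + G j l ≠ 0 := hj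
    -- u j ≠ 0
    have huj : u j ≠ 0 := by
      intro h0
      exact hj' (congrFun (hzero j h0) l)
    have hlej : l ≤ j := by
      by_cases hU : U j l = 0
      · have hG : G j l ≠ 0 := by
          intro h; exact hj' (by rw [hU, h, add_zero])
        exact le_of_lt (hGs j l (mem_suppB.2 hG))
      · have := hUs j (mem_suppB.2 hU)
        simp at this
        exact le_of_eq this
    exact mem_idealOf.2 ⟨j, mem_suppB.2 huj, hlej⟩
  · intro i hi
    have himax := (Finset.mem_filter.1 hi).2
    have hiid := (Finset.mem_filter.1 hi).1
    have hTui : (T u) i = U i i := by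
      rw [hTu, Finset.sum_apply]
      rw [Finset.sum_eq_single i]
      · have hGii : G i i = 0 := by
          by_contra h
          exact absurd (hGs i i (mem_suppB.2 h)) (lt_irrefl i)
        show U i i + G i i = U i i
        rw [hGii, add_zero]
      · intro j _ hji
        show U j i + G j i = 0
        have hUji : U j i = 0 := hUz j i (Ne.symm hji)
        by_cases hj0 : u j = 0
        · have h := congrFun (hzero j hj0) i
          exact h
        · have hGji : G j i = 0 := by
            by_contra h
            have hij : i < j := hGs j i (mem_suppB.2 h)
            have hjid : j ∈ idealOf u := suppB_subset_idealOf u (mem_suppB.2 hj0)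
            exact absurd (himax j hjid (le_of_lt hij)) (ne_of_lt hij)
          rw [hUji, hGji, add_zero]
      · intro h; exact absurd (Finset.mem_univ i) h
    have h1 : Wblk w (T u) i = Wblk w (U i) i := Wblk_congr hTui
    have h2 : Wblk w (blockProj i u) i = Wblk w u i := Wblk_congr (by simp [blockProj])
    rw [h1, ← hW i, h2]

end Key

section Main
variable [Fintype ι] [PartialOrder ι] [Field F] [Fintype F] {k : ι → ℕ}

lemma idealOf_subset_of_suppB {x u : ∀ i, Fin (k i) → F}
    (h : suppB x ⊆ idealOf u) : idealOf x ⊆ idealOf u := by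
  intro i hi
  obtain ⟨j, hj, hij⟩ := mem_idealOf.1 hi
  obtain ⟨m, hm, hjm⟩ := mem_idealOf.1 (h hj)
  exact mem_idealOf.2 ⟨m, hm, le_trans hij hjm⟩

lemma omega_le (w : F → ℕ) (T : (∀ i, Fin (k i) → F) →ₗ[F] (∀ i, Fin (k i) → F))
    (hT : InT w T) (u : ∀ i, Fin (k i) → F) :
    omegaW w (T u) ≤ omegaW w u := by
  obtain ⟨hsupp, hWmax⟩ := key w T hT u
  have hsub : idealOf (T u) ⊆ idealOf u := idealOf_subset_of_suppB hsupp
  rw [omegaW_eq_sum, omegaW_eq_sum]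
  calc ∑ i ∈ idealOf (T u), (if i ∈ maxOf (T u) then Wblk w (T u) i else Mw w)
      ≤ ∑ i ∈ idealOf (T u), (if i ∈ maxOf u then Wblk w u i else Mw w) := by
        apply Finset.sum_le_sum
        intro i hi
        by_cases hmu : i ∈ maxOf u
        · have himax := (Finset.mem_filter.1 hmu).2
          have hmtu : i ∈ maxOf (T u) :=
            Finset.mem_filter.2 ⟨hi, fun j hj hij => himax j (hsub hj) hij⟩
          rw [if_pos hmtu, if_pos hmu, hWmax i hmu]
        · rw [if_neg hmu]
          by_cases hmtu : i ∈ maxOf (T u)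
          · rw [if_pos hmtu]; exact Wblk_le_Mw w (T u) i
          · rw [if_neg hmtu]
    _ ≤ ∑ i ∈ idealOf u, (if i ∈ maxOf u then Wblk w u i else Mw w) :=
        Finset.sum_le_sum_of_subset hsub

theorem stmt6_aux (w : F → ℕ) (T : (∀ i, Fin (k i) → F) →ₗ[F] (∀ i, Fin (k i) → F))
    (hbij : Function.Bijective T) (hT : InT w T) :
    ∀ u : ∀ i, Fin (k i) → F, omegaW w (T u) = omegaW w u := by
  have hsum : ∑ v : ∀ i, Fin (k i) → F, omegaW w (T v)
      = ∑ v : ∀ i, Fin (k i) → F, omegaW w v :=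
    Fintype.sum_bijective T hbij _ _ (fun x => rfl)
  have hle : ∀ v ∈ (Finset.univ : Finset (∀ i, Fin (k i) → F)),
      omegaW w (T v) ≤ omegaW w v := fun v _ => omega_le w T hT v
  have := (Finset.sum_eq_sum_iff_of_le hle).1 hsum
  exact fun u => this u (Finset.mem_univ u)

end Main

/-- A linear isomorphism acting block-triangularly and preserving each block weight
is a linear isometry. -/
theorem stmt6 [Fintype ι] [PartialOrder ι] [Field F] [Fintype F] {k : ι → ℕ}
    (w : F → ℕ)
    (hw0 : ∀ a : F, w a = 0 ↔ a = 0)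
    (hwneg : ∀ a : F, w (-a) = w a)
    (hwadd : ∀ a b : F, w (a + b) ≤ w a + w b)
    (T : (∀ i, Fin (k i) → F) →ₗ[F] (∀ i, Fin (k i) → F))
    (hbij : Function.Bijective T)
    (hT : InT w T) :
    ∀ u : ∀ i, Fin (k i) → F, omegaW w (T u) = omegaW w u := by
  exact stmt6_aux w T hbij hT
end
end

section
/- For a linear isometry T of (V, d_{w,(P,π)}), the map η_T : P → P defined by η_T(i) = max I_{T(v_i)}^P (for any nonzero v_i ∈ V_i; this is well defined) is a (P,π)-automorphism of P. -/
attribute [local instance] Classical.propDecidable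

noncomputable section

variable {ι F : Type*}

/-!
Write `omegaW w u` as `∑ m, weightAt w u m`: a coordinate strictly below a nonzero block contributes
`Mw w`, any other one the weight of its own block. So a vector supported on a lower set `S` has
weight at most `#S * Mw w`, with equality for `constOn S a` when `w a = Mw w`, and a linear isometry
mapping the vectors supported on one lower set onto those supported on another preserves its size.

By induction on `#(pIdeal i)`, the isometry maps the vectors supported on `pIdeal i` onto those
supported on some `pIdeal μ`. By induction, vectors supported on `ltIdeal i` go onto those supported
on a lower set `K` of the same size. Adding anything supported on `K` to the image of a vector `v` of
block `i` does not change its weight; filling `K` with entries of weight `Mw w` then shows that the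
coordinates outside `K` contribute exactly the block weight of `v`. Each nonzero block off `K`
contributes at least `mw w > 0`, so vectors with entries `0` or `a`, `w a = mw w`, land in a single
block, and a basis argument puts all of block `i` into one block `μ`, with `ltIdeal μ = K`. The same
argument for the inverse isometry gives equality. Finally block `i` injects into block `φ i`, and
summing these inequalities gives `k (φ i) = k i`.
-/

open Finset

abbrev BlockSpace (F : Type*) {ι : Type*} (k : ι → ℕ) := ∀ i, Fin (k i) → F

def blockWeight (w : F → ℕ) {n : ℕ} (v : Fin n → F) : ℕ := univ.sup fun j => w (v j)

theorem Wblk_eq_blockWeight {k : ι → ℕ} (w : F → ℕ) (u : BlockSpace F k) (i : ι) :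
    Wblk w u i = blockWeight w (u i) := rfl

theorem le_blockWeight (w : F → ℕ) {n : ℕ} (v : Fin n → F) (j : Fin n) :
    w (v j) ≤ blockWeight w v :=
  le_sup (f := fun j => w (v j)) (mem_univ j)

section FieldWeight
variable {w : F → ℕ} {n : ℕ}

section Fintype
variable [Fintype F]

theorem le_Mw (a : F) : w a ≤ Mw w := le_sup (mem_univ a)

theorem blockWeight_le_Mw (v : Fin n → F) : blockWeight w v ≤ Mw w :=
  Finset.sup_le fun j _ => le_Mw (v j)

end Fintype

variable [Field F]

theorem exists_ne_zero_eq_mw : ∃ a : F, a ≠ 0 ∧ w a = mw w :=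
  Nat.sInf_mem (s := w '' {a | a ≠ 0}) ⟨w 1, 1, one_ne_zero, rfl⟩

theorem mw_le {a : F} (ha : a ≠ 0) : mw w ≤ w a := Nat.sInf_le ⟨a, ha, rfl⟩

theorem mw_pos (hw0 : ∀ a : F, w a = 0 ↔ a = 0) : 0 < mw w := by
  obtain ⟨a, ha, h⟩ := exists_ne_zero_eq_mw (w := w)
  exact h ▸ Nat.pos_of_ne_zero fun h0 => ha ((hw0 a).1 h0)

theorem mw_le_Mw [Fintype F] : mw w ≤ Mw w := by
  obtain ⟨a, -, h⟩ := exists_ne_zero_eq_mw (w := w)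
  exact h ▸ le_Mw a

theorem exists_eq_Mw [Fintype F] : ∃ a : F, w a = Mw w :=
  let ⟨a, _, h⟩ := exists_mem_eq_sup univ univ_nonempty w
  ⟨a, h.symm⟩

theorem Mw_pos [Fintype F] (hw0 : ∀ a : F, w a = 0 ↔ a = 0) : 0 < Mw w :=
  (mw_pos hw0).trans_le mw_le_Mw

theorem blockWeight_zero (hw : w 0 = 0) : blockWeight w (0 : Fin n → F) = 0 := by
  simp [blockWeight, hw]

theorem mw_le_blockWeight {v : Fin n → F} (hv : v ≠ 0) : mw w ≤ blockWeight w v := by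
  obtain ⟨j, hj⟩ := Function.ne_iff.1 hv
  exact (mw_le hj).trans (le_blockWeight w v j)

theorem blockWeight_le_of_forall {v : Fin n → F} {a : F} (hw : w 0 = 0)
    (h : ∀ j, v j = 0 ∨ v j = a) : blockWeight w v ≤ w a :=
  Finset.sup_le fun j _ => by rcases h j with h | h <;> simp [h, hw]

end FieldWeight

section Support
variable [Field F] {k : ι → ℕ} {u : BlockSpace F k} {m i j : ι} {S S' : Finset ι}

def supported (S : Finset ι) : Submodule F (BlockSpace F k) where
  carrier := {u | ∀ m ∉ S, u m = 0}
  add_mem' hu hv m hm := by simp [hu m hm, hv m hm]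
  zero_mem' _ _ := rfl
  smul_mem' c u hu m hm := by simp [hu m hm]

theorem single_mem_supported (h : j ∈ S) (x : Fin (k j) → F) :
    Pi.single j x ∈ (supported S : Submodule F (BlockSpace F k)) := fun m hm =>
  Pi.single_eq_of_ne (M := fun i => Fin (k i) → F) (fun he : m = j => hm (he ▸ h)) x

theorem supported_mono (h : S ⊆ S') :
    (supported S : Submodule F (BlockSpace F k)) ≤ supported S' :=
  fun _ hu m hm => hu m fun hmS => hm (h hmS)

theorem supported_le_of_single [Fintype ι] {p : Submodule F (BlockSpace F k)}
    (h : ∀ j ∈ S, ∀ x, Pi.single j x ∈ p) : supported S ≤ p := by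
  intro u hu
  rw [← univ_sum_single u]
  refine Submodule.sum_mem p fun j _ => ?_
  by_cases hj : j ∈ S
  · exact h j hj (u j)
  · rw [hu j hj, Pi.single_zero]
    exact p.zero_mem

def constOn (S : Finset ι) (a : F) : BlockSpace F k := fun m _ => if m ∈ S then a else 0

theorem constOn_mem_supported (a : F) : (constOn S a : BlockSpace F k) ∈ supported S :=
  fun _ hm => funext fun _ => if_neg hm

def zeroOn (K : Finset ι) : BlockSpace F k →ₗ[F] BlockSpace F k where
  toFun u m := if m ∈ K then 0 else u m
  map_add' u v := funext fun m => by by_cases h : m ∈ K <;> simp [h]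
  map_smul' c u := funext fun m => by by_cases h : m ∈ K <;> simp [h]

theorem zeroOn_apply_of_mem (h : m ∈ S) (u : BlockSpace F k) : zeroOn S u m = 0 := if_pos h

theorem sub_zeroOn_mem_supported (u : BlockSpace F k) : u - zeroOn S u ∈ supported S :=
  fun m hm => by simp [zeroOn, hm]

variable [Fintype ι] [PartialOrder ι]

theorem mem_idealOf_s12 : m ∈ idealOf u ↔ ∃ j, u j ≠ 0 ∧ m ≤ j := by
  simp [idealOf, suppB]

theorem mem_maxOf : m ∈ maxOf u ↔ u m ≠ 0 ∧ ∀ j, m < j → u j = 0 := by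
  simp only [maxOf, mem_filter, mem_idealOf_s12]
  constructor
  · rintro ⟨⟨j, hj, hmj⟩, hmax⟩
    obtain rfl := hmax j ⟨j, hj, le_rfl⟩ hmj
    exact ⟨hj, fun l hl => by_contra fun h => hl.ne (hmax l ⟨l, h, le_rfl⟩ hl.le)⟩
  · rintro ⟨hm, hmax⟩
    refine ⟨⟨m, hm, le_rfl⟩, fun j ⟨l, hl, hjl⟩ hmj => ?_⟩
    obtain rfl : m = l := by_contra fun h => hl (hmax l ((hmj.trans hjl).lt_of_ne h))
    exact le_antisymm hmj hjl

theorem supported_idealOf : u ∈ supported (idealOf u) :=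
  fun m hm => by_contra fun h => hm (mem_idealOf_s12.2 ⟨m, h, le_rfl⟩)

theorem isLowerSet_idealOf : IsLowerSet (idealOf u : Set ι) := by
  intro a b hba ha
  obtain ⟨j, hj, haj⟩ := mem_idealOf_s12.1 ha
  exact mem_idealOf_s12.2 ⟨j, hj, hba.trans haj⟩

theorem idealOf_subset (hS : IsLowerSet (S : Set ι)) (hu : u ∈ supported S) : idealOf u ⊆ S := by
  intro m hm
  obtain ⟨j, hj, hmj⟩ := mem_idealOf_s12.1 hm
  exact hS hmj (by_contra fun h => hj (hu j h))

end Support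

section PrincipalIdeal
variable [Fintype ι] [PartialOrder ι] {i j : ι}

def ltIdeal (i : ι) : Finset ι := univ.filter fun j => j < i

theorem mem_pIdeal : j ∈ pIdeal i ↔ j ≤ i := by simp [pIdeal]

theorem mem_ltIdeal : j ∈ ltIdeal i ↔ j < i := by simp [ltIdeal]

theorem pIdeal_eq_insert_ltIdeal (i : ι) : pIdeal i = insert i (ltIdeal i) := by
  ext j
  simp [mem_pIdeal, mem_ltIdeal, le_iff_lt_or_eq, or_comm]

theorem card_pIdeal (i : ι) : #(pIdeal i) = #(ltIdeal i) + 1 := by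
  rw [pIdeal_eq_insert_ltIdeal, card_insert_of_notMem fun h => lt_irrefl i (mem_ltIdeal.1 h)]

theorem ltIdeal_subset_pIdeal (i : ι) : ltIdeal i ⊆ pIdeal i :=
  pIdeal_eq_insert_ltIdeal i ▸ subset_insert i (ltIdeal i)

theorem isLowerSet_pIdeal (i : ι) : IsLowerSet (pIdeal i : Set ι) :=
  fun _ _ hba ha => mem_pIdeal.2 (hba.trans (mem_pIdeal.1 ha))

theorem isLowerSet_ltIdeal (i : ι) : IsLowerSet (ltIdeal i : Set ι) :=
  fun _ _ hba ha => mem_ltIdeal.2 (hba.trans_lt (mem_ltIdeal.1 ha))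

theorem card_pIdeal_lt (h : j < i) : #(pIdeal j) < #(pIdeal i) :=
  card_lt_card ⟨fun _ hl => mem_pIdeal.2 ((mem_pIdeal.1 hl).trans h.le),
    fun hsub => h.not_ge (mem_pIdeal.1 (hsub (mem_pIdeal.2 le_rfl)))⟩

end PrincipalIdeal

section WeightAt
variable [Fintype ι] [PartialOrder ι] [Field F] [Fintype F] {k : ι → ℕ} {w : F → ℕ}
  {u u' : BlockSpace F k} {m j : ι} {S : Finset ι}

def weightAt (w : F → ℕ) (u : BlockSpace F k) (m : ι) : ℕ :=
  if ∃ j, m < j ∧ u j ≠ 0 then Mw w else Wblk w u m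

theorem weightAt_of_lt (hmj : m < j) (hj : u j ≠ 0) : weightAt w u m = Mw w :=
  if_pos ⟨j, hmj, hj⟩

theorem weightAt_of_forall_lt (h : ∀ j, m < j → u j = 0) : weightAt w u m = Wblk w u m :=
  if_neg fun ⟨j, hmj, hj⟩ => hj (h j hmj)

theorem weightAt_le_Mw : weightAt w u m ≤ Mw w := by
  unfold weightAt
  split
  · exact le_rfl
  · exact blockWeight_le_Mw (u m)

theorem Wblk_le_weightAt : Wblk w u m ≤ weightAt w u m := by
  unfold weightAt
  split
  · exact blockWeight_le_Mw (u m)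
  · exact le_rfl

theorem mw_le_weightAt (h : u m ≠ 0) : mw w ≤ weightAt w u m :=
  (mw_le_blockWeight h).trans Wblk_le_weightAt

theorem weightAt_eq_zero (hw : w 0 = 0) (h : ∀ j, m ≤ j → u j = 0) : weightAt w u m = 0 := by
  rw [weightAt_of_forall_lt fun j hmj => h j hmj.le, Wblk_eq_blockWeight, h m le_rfl,
    blockWeight_zero hw]

theorem weightAt_congr (h : ∀ j, m ≤ j → u j = u' j) : weightAt w u m = weightAt w u' m := by
  have hex : (∃ j, m < j ∧ u j ≠ 0) ↔ ∃ j, m < j ∧ u' j ≠ 0 :=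
    exists_congr fun j => and_congr_right fun hmj => by rw [h j hmj.le]
  simp only [weightAt, Wblk_eq_blockWeight, hex, h m le_rfl]

theorem omegaW_eq_sum_weightAt (hw : w 0 = 0) (u : BlockSpace F k) :
    omegaW w u = ∑ m, weightAt w u m := by
  have houtside : ∀ m ∉ idealOf u, weightAt w u m = 0 := fun m hm =>
    weightAt_eq_zero hw fun j hmj => by_contra fun hj => hm (mem_idealOf_s12.2 ⟨j, hj, hmj⟩)
  have hmax : ∀ m ∈ maxOf u, weightAt w u m = Wblk w u m := fun m hm =>
    weightAt_of_forall_lt (mem_maxOf.1 hm).2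
  have hnonmax : ∀ m ∈ idealOf u \ maxOf u, weightAt w u m = Mw w := by
    intro m hm
    obtain ⟨hmI, hmM⟩ := mem_sdiff.1 hm
    obtain ⟨j, hj, hmj⟩ := mem_idealOf_s12.1 hmI
    rcases hmj.lt_or_eq with hmj | rfl
    · exact weightAt_of_lt hmj hj
    · obtain ⟨l, hml, hl⟩ : ∃ l, m < l ∧ u l ≠ 0 := by
        by_contra! h
        exact hmM (mem_maxOf.2 ⟨hj, h⟩)
      exact weightAt_of_lt hml hl
  have hsub : maxOf u ⊆ idealOf u := filter_subset _ _
  rw [← sum_subset (subset_univ _) fun m _ => houtside m, ← sum_sdiff hsub,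
    sum_congr rfl hnonmax, sum_congr rfl hmax, sum_const, smul_eq_mul, omegaW, add_comm]

theorem omegaW_eq_zero_iff (hw0 : ∀ a : F, w a = 0 ↔ a = 0) : omegaW w u = 0 ↔ u = 0 := by
  refine ⟨fun h => ?_, fun h => ?_⟩
  · by_contra hu
    obtain ⟨m, hm⟩ := Function.ne_iff.1 hu
    have := (mw_pos hw0).trans_le ((mw_le_weightAt hm).trans
      (single_le_sum (fun _ _ => Nat.zero_le _) (mem_univ m)))
    rw [← omegaW_eq_sum_weightAt ((hw0 0).2 rfl), h] at this
    exact lt_irrefl 0 this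
  · rw [omegaW_eq_sum_weightAt ((hw0 0).2 rfl), h]
    exact sum_eq_zero fun m _ => weightAt_eq_zero ((hw0 0).2 rfl) fun _ _ => rfl

theorem sum_weightAt_eq_of_mem_supported (hw : w 0 = 0) (hS : IsLowerSet (S : Set ι))
    (hu : u ∈ supported S) : ∑ m, weightAt w u m = ∑ m ∈ S, weightAt w u m :=
  (sum_subset (subset_univ S) fun _ _ hm =>
    weightAt_eq_zero hw fun j hmj => hu j fun hj => hm (hS hmj hj)).symm

theorem omegaW_le_card_mul (hw : w 0 = 0) (hS : IsLowerSet (S : Set ι))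
    (hu : u ∈ supported S) : omegaW w u ≤ #S * Mw w := by
  rw [omegaW_eq_sum_weightAt hw, sum_weightAt_eq_of_mem_supported hw hS hu]
  exact sum_le_card_nsmul S _ _ fun m _ => weightAt_le_Mw

theorem omegaW_of_mem_supported_pIdeal (hw : w 0 = 0) {i : ι} (hu : u ∈ supported (pIdeal i))
    (hi : u i ≠ 0) : omegaW w u = Wblk w u i + #(ltIdeal i) * Mw w := by
  rw [omegaW_eq_sum_weightAt hw, sum_weightAt_eq_of_mem_supported hw (isLowerSet_pIdeal i) hu,
    pIdeal_eq_insert_ltIdeal, sum_insert fun h => lt_irrefl i (mem_ltIdeal.1 h),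
    weightAt_of_forall_lt fun j hij => hu j fun hj => (mem_pIdeal.1 hj).not_gt hij,
    sum_congr rfl fun m hm => weightAt_of_lt (mem_ltIdeal.1 hm) hi, sum_const, smul_eq_mul]

theorem omegaW_add_constOn (hk : ∀ i, 0 < k i) (hw : w 0 = 0) (hS : IsLowerSet (S : Set ι))
    (hu : ∀ m ∈ S, u m = 0) {a : F} (ha : w a = Mw w) :
    omegaW w (u + constOn S a) = ∑ m ∈ Sᶜ, weightAt w u m + #S * Mw w := by
  have hcompl : ∀ m ∈ Sᶜ, weightAt w (u + constOn S a) m = weightAt w u m := by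
    refine fun m hm => weightAt_congr fun j hmj => ?_
    have hj : j ∉ S := fun hj => mem_compl.1 hm (hS hmj hj)
    rw [Pi.add_apply, show constOn S a j = 0 from funext fun _ => if_neg hj, add_zero]
  have hS' : ∀ m ∈ S, weightAt w (u + constOn S a) m = Mw w := by
    refine fun m hm => le_antisymm weightAt_le_Mw ?_
    calc Mw w = w ((u + constOn S a : BlockSpace F k) m ⟨0, hk m⟩) := by
          simp [constOn, hu m hm, hm, ha]
      _ ≤ weightAt w (u + constOn S a) m := (le_blockWeight w _ _).trans Wblk_le_weightAt
  rw [omegaW_eq_sum_weightAt hw, ← sum_compl_add_sum S, sum_congr rfl hcompl, sum_congr rfl hS',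
    sum_const, smul_eq_mul]

theorem omegaW_constOn (hk : ∀ i, 0 < k i) (hw : w 0 = 0) (hS : IsLowerSet (S : Set ι)) {a : F}
    (ha : w a = Mw w) : omegaW w (constOn S a : BlockSpace F k) = #S * Mw w := by
  have h := omegaW_add_constOn (u := (0 : BlockSpace F k)) hk hw hS (fun _ _ => rfl) ha
  rwa [zero_add, sum_eq_zero fun _ _ => weightAt_eq_zero (u := 0) hw fun _ _ => rfl, zero_add] at h

end WeightAt

section SingleBlock
variable [Fintype ι] [PartialOrder ι] [Field F] [Fintype F] {k : ι → ℕ} {w : F → ℕ}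
  {K : Finset ι} {κ : ℕ} {G : (Fin κ → F) →ₗ[F] BlockSpace F k}

theorem apply_ne_zero_of_sum_weightAt_eq (hw0 : ∀ a : F, w a = 0 ↔ a = 0)
    (hG : ∀ v ≠ 0, ∑ m ∈ Kᶜ, weightAt w (G v) m = blockWeight w v) {v : Fin κ → F} (hv : v ≠ 0) :
    G v ≠ 0 := by
  intro h
  have := (mw_pos hw0).trans_le (mw_le_blockWeight hv)
  rw [← hG v hv, h, sum_eq_zero fun _ _ => weightAt_eq_zero (u := 0) ((hw0 0).2 rfl) fun _ _ => rfl]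
    at this
  exact lt_irrefl 0 this

theorem eq_of_apply_ne_zero (hGK : ∀ v, ∀ m ∈ K, G v m = 0)
    (hG : ∀ v ≠ 0, ∑ m ∈ Kᶜ, weightAt w (G v) m = blockWeight w v) {v : Fin κ → F} (hv : v ≠ 0)
    (hlt : blockWeight w v < 2 * mw w) {m m' : ι} (hm : G v m ≠ 0) (hm' : G v m' ≠ 0) : m = m' := by
  by_contra hne
  have hsub : {m, m'} ⊆ Kᶜ := by
    simp only [insert_subset_iff, singleton_subset_iff, mem_compl]
    exact ⟨fun h => hm (hGK v m h), fun h => hm' (hGK v m' h)⟩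
  have hsum := sum_le_sum_of_subset (f := fun x => weightAt w (G v) x) hsub
  rw [sum_pair hne, hG v hv] at hsum
  have := mw_le_weightAt (w := w) hm
  have := mw_le_weightAt (w := w) hm'
  omega

/-- Vectors with all entries in `{0, a}`, where `w a = mw w`, have weight below `2 * mw w`, so their
images sit in a single block; comparing `Pi.single j₀ a`, `Pi.single j a` and their sum shows that
these blocks all agree. -/
theorem apply_single_eq_zero (hw0 : ∀ a : F, w a = 0 ↔ a = 0) (hGK : ∀ v, ∀ m ∈ K, G v m = 0)
    (hG : ∀ v ≠ 0, ∑ m ∈ Kᶜ, weightAt w (G v) m = blockWeight w v) {a : F} (ha : a ≠ 0)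
    (hwa : w a = mw w) {j₀ : Fin κ} {μ : ι} (hμ : G (Pi.single j₀ a) μ ≠ 0) (j : Fin κ) {m : ι}
    (hm : m ≠ μ) : G (Pi.single j a) m = 0 := by
  have hsmall : ∀ v : Fin κ → F, v ≠ 0 → (∀ c, v c = 0 ∨ v c = a) →
      ∀ {m m'}, G v m ≠ 0 → G v m' ≠ 0 → m = m' := by
    refine fun v hv hva => eq_of_apply_ne_zero hGK hG hv ?_
    have := blockWeight_le_of_forall ((hw0 0).2 rfl) hva
    have := mw_pos hw0
    omega
  have hsingle : ∀ j, Pi.single j a ≠ (0 : Fin κ → F) := fun j h => ha (by simpa using congrFun h j)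
  have hsingle_mem : ∀ j c : Fin κ, (Pi.single j a : Fin κ → F) c = 0 ∨
      (Pi.single j a : Fin κ → F) c = a := fun j c => by
    by_cases h : c = j <;> simp [h]
  by_contra hj
  have hjμ : G (Pi.single j a) μ = 0 :=
    by_contra fun h => hm (hsmall _ (hsingle j) (hsingle_mem j) hj h)
  have hj₀m : G (Pi.single j₀ a) m = 0 :=
    by_contra fun h => hm (hsmall _ (hsingle j₀) (hsingle_mem j₀) h hμ)
  have hjj₀ : j ≠ j₀ := by
    rintro rfl
    exact hμ hjμ
  refine hm (hsmall (Pi.single j₀ a + Pi.single j a) ?_ ?_ (m := m) (m' := μ) ?_ ?_)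
  · intro h
    simpa [Pi.single_apply, hjj₀.symm, ha] using congrFun h j₀
  · intro c
    by_cases hc : c = j₀
    · subst hc; simp [hjj₀.symm]
    · simpa [Pi.single_apply, hc] using hsingle_mem j c
  · simpa [map_add, hj₀m] using hj
  · simpa [map_add, hjμ] using hμ

theorem exists_single_block (hw0 : ∀ a : F, w a = 0 ↔ a = 0) (hκ : 0 < κ)
    (hGK : ∀ v, ∀ m ∈ K, G v m = 0)
    (hG : ∀ v ≠ 0, ∑ m ∈ Kᶜ, weightAt w (G v) m = blockWeight w v) :
    ∃ μ ∉ K, ltIdeal μ ⊆ K ∧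
      ∀ v, (∀ m ≠ μ, G v m = 0) ∧ (v ≠ 0 → Wblk w (G v) μ = blockWeight w v) := by
  obtain ⟨a, ha, hwa⟩ := exists_ne_zero_eq_mw (w := w)
  have hb : Pi.single ⟨0, hκ⟩ a ≠ (0 : Fin κ → F) := fun h => ha (by simpa using congrFun h ⟨0, hκ⟩)
  obtain ⟨μ, hμ⟩ := Function.ne_iff.1 (apply_ne_zero_of_sum_weightAt_eq hw0 hG hb)
  have hsupp : ∀ v, ∀ m ≠ μ, G v m = 0 := by
    intro v m hm
    rw [← univ_sum_single v, map_sum, Finset.sum_apply]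
    refine sum_eq_zero fun j _ => ?_
    rw [show Pi.single j (v j) = (v j * a⁻¹) • Pi.single j a by
      rw [← Pi.single_smul', smul_eq_mul, inv_mul_cancel_right₀ ha], map_smul, Pi.smul_apply,
      apply_single_eq_zero hw0 hGK hG ha hwa hμ j hm, smul_zero]
  have hμK : μ ∉ K := fun h => hμ (hGK _ μ h)
  have hbelow : ltIdeal μ ⊆ K := by
    intro m hm
    by_contra hmK
    have hsub : {m, μ} ⊆ Kᶜ := by simp [insert_subset_iff, hmK, hμK]
    have hsum := sum_le_sum_of_subset (f := fun x => weightAt w (G (Pi.single ⟨0, hκ⟩ a)) x) hsub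
    rw [sum_pair (mem_ltIdeal.1 hm).ne, hG _ hb, weightAt_of_lt (mem_ltIdeal.1 hm) hμ] at hsum
    have := (mw_pos hw0).trans_le (mw_le_weightAt (w := w) hμ)
    have := blockWeight_le_Mw (w := w) (Pi.single ⟨0, hκ⟩ a)
    omega
  refine ⟨μ, hμK, hbelow, fun v => ⟨hsupp v, fun hv => ?_⟩⟩
  have hzero : ∀ m ∈ Kᶜ, m ≠ μ → weightAt w (G v) m = 0 := by
    refine fun m hmK hm => weightAt_eq_zero ((hw0 0).2 rfl) fun j hmj => hsupp v j ?_
    rintro rfl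
    exact mem_compl.1 hmK (hbelow (mem_ltIdeal.2 (hmj.lt_of_ne hm)))
  rw [← hG v hv, sum_eq_single_of_mem μ (mem_compl.2 hμK) hzero,
    weightAt_of_forall_lt fun j hμj => hsupp v j hμj.ne']

end SingleBlock

section MapSupported
variable [Fintype ι] [PartialOrder ι] [Field F] {k : ι → ℕ}

theorem exists_map_supported_ltIdeal_eq {f : BlockSpace F k →ₗ[F] BlockSpace F k} {i : ι}
    (h : ∀ j < i, ∃ ν, (supported (pIdeal j)).map f = supported (pIdeal ν)) :
    ∃ K : Finset ι, IsLowerSet (K : Set ι) ∧ (supported (ltIdeal i)).map f = supported K := by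
  choose! ν hν using h
  refine ⟨(ltIdeal i).biUnion fun j => pIdeal (ν j), ?_, le_antisymm ?_ ?_⟩
  · intro a b hba ha
    obtain ⟨j, hj, haj⟩ := mem_biUnion.1 ha
    exact mem_biUnion.2 ⟨j, hj, isLowerSet_pIdeal _ hba haj⟩
  · refine Submodule.map_le_iff_le_comap.2 (supported_le_of_single fun j hj x => ?_)
    have hx := Submodule.mem_map_of_mem (f := f) (single_mem_supported (mem_pIdeal.2 le_rfl) x)
    rw [hν j (mem_ltIdeal.1 hj)] at hx
    exact supported_mono (subset_biUnion_of_mem (fun j => pIdeal (ν j)) hj) hx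
  · refine supported_le_of_single fun l hl x => ?_
    obtain ⟨j, hj, hlj⟩ := mem_biUnion.1 hl
    have hx : Pi.single l x ∈ (supported (pIdeal j)).map f :=
      hν j (mem_ltIdeal.1 hj) ▸ single_mem_supported hlj x
    refine Submodule.map_mono (supported_mono fun m hm => ?_) hx
    exact mem_ltIdeal.2 ((mem_pIdeal.1 hm).trans_lt (mem_ltIdeal.1 hj))

end MapSupported

section Isometry
variable [Fintype ι] [PartialOrder ι] [Field F] [Fintype F] {k : ι → ℕ} {w : F → ℕ}
  {E : BlockSpace F k ≃ₗ[F] BlockSpace F k} {S S' : Finset ι}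

theorem omegaW_symm_apply (hE : ∀ u, omegaW w (E u) = omegaW w u) (u : BlockSpace F k) :
    omegaW w (E.symm u) = omegaW w u := by
  rw [← hE, E.apply_symm_apply]

theorem card_le_card_of_map_supported_le (hk : ∀ i, 0 < k i) (hw0 : ∀ a : F, w a = 0 ↔ a = 0)
    {f : BlockSpace F k →ₗ[F] BlockSpace F k} (hf : ∀ u, omegaW w (f u) = omegaW w u)
    (hS : IsLowerSet (S : Set ι)) (hS' : IsLowerSet (S' : Set ι))
    (h : (supported S).map f ≤ supported S') : #S ≤ #S' := by
  obtain ⟨a, ha⟩ := exists_eq_Mw (w := w)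
  have hle := omegaW_le_card_mul ((hw0 0).2 rfl) hS'
    (h (Submodule.mem_map_of_mem (constOn_mem_supported (k := k) a)))
  rw [hf, omegaW_constOn hk ((hw0 0).2 rfl) hS ha] at hle
  exact Nat.le_of_mul_le_mul_right hle (Mw_pos hw0)

theorem card_eq_card_of_map_supported_eq (hk : ∀ i, 0 < k i) (hw0 : ∀ a : F, w a = 0 ↔ a = 0)
    (hE : ∀ u, omegaW w (E u) = omegaW w u) (hS : IsLowerSet (S : Set ι))
    (hS' : IsLowerSet (S' : Set ι)) (h : (supported S).map E.toLinearMap = supported S') :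
    #S = #S' :=
  le_antisymm (card_le_card_of_map_supported_le hk hw0 hE hS hS' h.le)
    (card_le_card_of_map_supported_le hk hw0 (omegaW_symm_apply hE) hS' hS
      ((Submodule.map_symm_eq_iff E).2 h).le)

end Isometry

section ImageOfPrincipalIdeal
variable [Fintype ι] [PartialOrder ι] [Field F] [Fintype F] {k : ι → ℕ} {w : F → ℕ}
  {E : BlockSpace F k ≃ₗ[F] BlockSpace F k} {i : ι} {K : Finset ι}

theorem omegaW_apply_single_add (hk : ∀ i, 0 < k i) (hw0 : ∀ a : F, w a = 0 ↔ a = 0)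
    (hE : ∀ u, omegaW w (E u) = omegaW w u) (hK : IsLowerSet (K : Set ι))
    (hKi : (supported (ltIdeal i)).map E.toLinearMap = supported K) {v : Fin (k i) → F}
    (hv : v ≠ 0) {y : BlockSpace F k} (hy : y ∈ supported K) :
    omegaW w (E (Pi.single i v) + y) = blockWeight w v + #K * Mw w := by
  have hx : E.symm y ∈ supported (ltIdeal i) := (Submodule.mem_map_equiv _).1 (hKi ▸ hy)
  have hu : Pi.single i v + E.symm y ∈ supported (pIdeal i) :=
    add_mem (single_mem_supported (mem_pIdeal.2 le_rfl) v)
      (supported_mono (ltIdeal_subset_pIdeal i) hx)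
  have hui : (Pi.single i v + E.symm y : BlockSpace F k) i = v := by
    simp [hx i fun h => lt_irrefl i (mem_ltIdeal.1 h)]
  rw [← E.apply_symm_apply y, ← map_add, hE,
    omegaW_of_mem_supported_pIdeal ((hw0 0).2 rfl) hu (by rwa [hui]), Wblk_eq_blockWeight, hui,
    card_eq_card_of_map_supported_eq hk hw0 hE (isLowerSet_ltIdeal i) hK hKi]

theorem sum_weightAt_zeroOn_apply_single (hk : ∀ i, 0 < k i) (hw0 : ∀ a : F, w a = 0 ↔ a = 0)
    (hE : ∀ u, omegaW w (E u) = omegaW w u) (hK : IsLowerSet (K : Set ι))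
    (hKi : (supported (ltIdeal i)).map E.toLinearMap = supported K) {v : Fin (k i) → F}
    (hv : v ≠ 0) :
    ∑ m ∈ Kᶜ, weightAt w (zeroOn K (E (Pi.single i v))) m = blockWeight w v := by
  set u := E (Pi.single i v)
  obtain ⟨a, ha⟩ := exists_eq_Mw (w := w)
  have h := omegaW_add_constOn hk ((hw0 0).2 rfl) hK (fun m hm => zeroOn_apply_of_mem hm u) ha
  rw [show zeroOn K u + constOn K a = u + (constOn K a - (u - zeroOn K u)) by abel,
    omegaW_apply_single_add hk hw0 hE hK hKi hv
      (sub_mem (constOn_mem_supported a) (sub_zeroOn_mem_supported u))] at h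
  omega

/-- The part of `E (Pi.single i v)` outside `K` lives in one block `μ`, and comparing the weight
of that part computed at `μ` with the one computed through `E` gives `ltIdeal μ = K`. -/
theorem exists_zeroOn_apply_single_eq_zero (hk : ∀ i, 0 < k i) (hw0 : ∀ a : F, w a = 0 ↔ a = 0)
    (hE : ∀ u, omegaW w (E u) = omegaW w u) (hK : IsLowerSet (K : Set ι))
    (hKi : (supported (ltIdeal i)).map E.toLinearMap = supported K) :
    ∃ μ, ltIdeal μ = K ∧ ∀ v, ∀ m ≠ μ, zeroOn K (E (Pi.single i v)) m = 0 := by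
  let G := zeroOn K ∘ₗ E.toLinearMap ∘ₗ LinearMap.single F (fun i => Fin (k i) → F) i
  obtain ⟨μ, -, hbelow, hμ⟩ := exists_single_block hw0 (hk i) (G := G)
    (fun _ _ hm => zeroOn_apply_of_mem hm _)
    (fun _ hv => sum_weightAt_zeroOn_apply_single hk hw0 hE hK hKi hv)
  refine ⟨μ, ?_, fun v => (hμ v).1⟩
  have hv : (fun _ => 1 : Fin (k i) → F) ≠ 0 := Function.ne_iff.2 ⟨⟨0, hk i⟩, one_ne_zero⟩
  have hGv : G (fun _ => 1) ∈ supported (pIdeal μ) := fun m hm =>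
    (hμ _).1 m fun h => hm (mem_pIdeal.2 h.le)
  have hGμ : G (fun _ => 1) μ ≠ 0 := fun h => by
    have := (mw_pos hw0).trans_le (mw_le_blockWeight (w := w) hv)
    rw [← (hμ _).2 hv, Wblk_eq_blockWeight, h, blockWeight_zero ((hw0 0).2 rfl)] at this
    exact lt_irrefl 0 this
  have hω := omegaW_apply_single_add hk hw0 hE hK hKi hv
    (neg_mem (sub_zeroOn_mem_supported (E (Pi.single i fun _ => 1))))
  rw [← sub_eq_add_neg, sub_sub_cancel,
    ← show G (fun _ => 1) = zeroOn K (E (Pi.single i fun _ => 1)) from rfl,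
    omegaW_of_mem_supported_pIdeal ((hw0 0).2 rfl) hGv hGμ, (hμ _).2 hv] at hω
  exact eq_of_subset_of_card_le hbelow
    (Nat.eq_of_mul_eq_mul_right (Mw_pos hw0) (by omega)).ge

theorem exists_map_supported_pIdeal_le (hk : ∀ i, 0 < k i) (hw0 : ∀ a : F, w a = 0 ↔ a = 0)
    (hE : ∀ u, omegaW w (E u) = omegaW w u)
    (h : ∀ j < i, ∃ ν, (supported (pIdeal j)).map E.toLinearMap = supported (pIdeal ν)) :
    ∃ μ, #(pIdeal μ) = #(pIdeal i) ∧
      (supported (pIdeal i)).map E.toLinearMap ≤ supported (pIdeal μ) := by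
  obtain ⟨K, hK, hKi⟩ := exists_map_supported_ltIdeal_eq h
  obtain ⟨μ, hμK, hμ⟩ := exists_zeroOn_apply_single_eq_zero hk hw0 hE hK hKi
  refine ⟨μ, ?_, Submodule.map_le_iff_le_comap.2 (supported_le_of_single fun j hj x => ?_)⟩
  · rw [card_pIdeal, card_pIdeal, hμK,
      card_eq_card_of_map_supported_eq hk hw0 hE (isLowerSet_ltIdeal i) hK hKi]
  have hK_le : (supported K : Submodule F (BlockSpace F k)) ≤ supported (pIdeal μ) :=
    supported_mono (hμK ▸ ltIdeal_subset_pIdeal μ)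
  rcases (mem_pIdeal.1 hj).lt_or_eq with hji | rfl
  · refine hK_le (hKi ▸ Submodule.mem_map_of_mem ?_)
    exact single_mem_supported (mem_ltIdeal.2 hji) x
  · rw [Submodule.mem_comap, LinearEquiv.coe_coe, ← sub_add_cancel (E (Pi.single j x))
      (zeroOn K (E (Pi.single j x)))]
    exact add_mem (hK_le (sub_zeroOn_mem_supported _))
      fun m hm => hμ x m fun h => hm (mem_pIdeal.2 h.le)

end ImageOfPrincipalIdeal

section OrderAutomorphism
variable [Fintype ι] [PartialOrder ι] [Field F] {k : ι → ℕ} {i j : ι}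

theorem supported_pIdeal_le_iff (hk : ∀ i, 0 < k i) :
    (supported (pIdeal i) : Submodule F (BlockSpace F k)) ≤ supported (pIdeal j) ↔ i ≤ j := by
  refine ⟨fun h => by_contra fun hij => ?_, fun h => supported_mono fun m hm =>
    mem_pIdeal.2 ((mem_pIdeal.1 hm).trans h)⟩
  have hi := h (single_mem_supported (mem_pIdeal.2 le_rfl) (fun _ => (1 : F))) i
    fun hi => hij (mem_pIdeal.1 hi)
  simpa using congrFun hi ⟨0, hk i⟩

theorem le_of_idealOf_eq_pIdeal {f : BlockSpace F k →ₗ[F] BlockSpace F k} {μ : ι}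
    (h : ∀ v : BlockSpace F k, suppB v ⊆ {i} → v ≠ 0 → idealOf (f v) = pIdeal μ) : k i ≤ k μ := by
  let g := LinearMap.proj μ ∘ₗ f ∘ₗ LinearMap.single F (fun i => Fin (k i) → F) i
  have hg : Function.Injective g := by
    refine (injective_iff_map_eq_zero g).2 fun v hv => by_contra fun hv0 => ?_
    have hsingle : Pi.single i v ≠ (0 : BlockSpace F k) := fun h0 => hv0 (by
      simpa using congrFun h0 i)
    have hideal := h _ (fun m hm => by by_contra hmi; simp_all [suppB]) hsingle
    obtain ⟨l, hl, hμl⟩ := mem_idealOf_s12.1 (hideal ▸ mem_pIdeal.2 le_rfl)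
    obtain rfl := le_antisymm (mem_pIdeal.1 (hideal ▸ mem_idealOf_s12.2 ⟨l, hl, le_rfl⟩)) hμl
    exact hl hv
  simpa using LinearMap.finrank_le_finrank_of_injective hg

theorem map_supported_pIdeal_eq_of_le {E : BlockSpace F k ≃ₗ[F] BlockSpace F k}
    (hk : ∀ i, 0 < k i) {μ μ' : ι}
    (h : (supported (pIdeal i)).map E.toLinearMap ≤ supported (pIdeal μ))
    (h' : (supported (pIdeal μ)).map E.symm.toLinearMap ≤ supported (pIdeal μ'))
    (hcard : #(pIdeal μ') = #(pIdeal i)) :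
    (supported (pIdeal i)).map E.toLinearMap = supported (pIdeal μ) := by
  have hiμ' : i ≤ μ' := (supported_pIdeal_le_iff hk).1 fun u hu => by
    simpa using h' (Submodule.mem_map_of_mem (h (Submodule.mem_map_of_mem hu)))
  have hμ' : pIdeal i = pIdeal μ' :=
    eq_of_subset_of_card_le (fun m hm => mem_pIdeal.2 ((mem_pIdeal.1 hm).trans hiμ')) hcard.le
  refine le_antisymm h fun x hx => (Submodule.mem_map_equiv _).2 ?_
  exact hμ' ▸ h' (Submodule.mem_map_of_mem hx)

variable [Fintype F] {w : F → ℕ} {E : BlockSpace F k ≃ₗ[F] BlockSpace F k}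

theorem exists_map_supported_pIdeal_eq (hk : ∀ i, 0 < k i) (hw0 : ∀ a : F, w a = 0 ↔ a = 0)
    (hE : ∀ u, omegaW w (E u) = omegaW w u) (i : ι) :
    ∃ μ, (supported (pIdeal i)).map E.toLinearMap = supported (pIdeal μ) := by
  suffices ∀ n, ∀ E : BlockSpace F k ≃ₗ[F] BlockSpace F k, (∀ u, omegaW w (E u) = omegaW w u) →
      ∀ i : ι, #(pIdeal i) ≤ n →
        ∃ μ, (supported (pIdeal i)).map E.toLinearMap = supported (pIdeal μ) from
    this _ E hE i le_rfl
  intro n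
  induction n with
  | zero =>
    intro E _ i hi
    exact absurd hi (by rw [card_pIdeal]; omega)
  | succ n ih =>
    intro E hE i hi
    obtain ⟨μ, hμ, hiμ⟩ := exists_map_supported_pIdeal_le (i := i) hk hw0 hE fun j hj =>
      ih E hE j (by have := card_pIdeal_lt hj; omega)
    obtain ⟨μ', hμ', hμμ'⟩ := exists_map_supported_pIdeal_le (i := μ) hk hw0 (omegaW_symm_apply hE)
      fun j hj => ih E.symm (omegaW_symm_apply hE) j (by have := card_pIdeal_lt hj; omega)
    exact ⟨μ, map_supported_pIdeal_eq_of_le hk hiμ hμμ' (hμ'.trans hμ)⟩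

theorem idealOf_apply_eq_pIdeal (hk : ∀ i, 0 < k i) (hw0 : ∀ a : F, w a = 0 ↔ a = 0)
    (hE : ∀ u, omegaW w (E u) = omegaW w u) {μ : ι}
    (h : (supported (pIdeal i)).map E.toLinearMap = supported (pIdeal μ)) {v : BlockSpace F k}
    (hv : suppB v ⊆ {i}) (hv0 : v ≠ 0) : idealOf (E v) = pIdeal μ := by
  have hvi : v ∈ supported (pIdeal i) := fun m hm => by_contra fun hm0 =>
    hm (mem_pIdeal.2 (mem_singleton.1 (hv (by simpa [suppB] using hm0))).le)
  have hvi0 : v i ≠ 0 := by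
    obtain ⟨m, hm⟩ := Function.ne_iff.1 hv0
    obtain rfl := mem_singleton.1 (hv (by simpa [suppB] using hm))
    exact hm
  have hEv : E v ∈ supported (pIdeal μ) := h ▸ Submodule.mem_map_of_mem hvi
  refine eq_of_subset_of_card_le (idealOf_subset (isLowerSet_pIdeal μ) hEv) ?_
  have hlt : #(ltIdeal i) * Mw w < #(idealOf (E v)) * Mw w := by
    calc #(ltIdeal i) * Mw w < Wblk w v i + #(ltIdeal i) * Mw w := by
          have := (mw_pos hw0).trans_le (mw_le_blockWeight (w := w) hvi0)
          rw [Wblk_eq_blockWeight]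
          omega
      _ = omegaW w (E v) := by rw [hE, omegaW_of_mem_supported_pIdeal ((hw0 0).2 rfl) hvi hvi0]
      _ ≤ _ := omegaW_le_card_mul ((hw0 0).2 rfl) isLowerSet_idealOf supported_idealOf
  rw [← card_eq_card_of_map_supported_eq hk hw0 hE (isLowerSet_pIdeal i) (isLowerSet_pIdeal μ) h,
    card_pIdeal]
  exact Nat.lt_of_mul_lt_mul_right hlt

end OrderAutomorphism

theorem eq_of_forall_le_comp_equiv {α : Type*} [Fintype α] (e : α ≃ α) {f : α → ℕ}
    (h : ∀ a, f a ≤ f (e a)) (a : α) : f (e a) = f a :=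
  ((sum_eq_sum_iff_of_le fun a _ => h a).1 (e.sum_comp f).symm a (mem_univ a)).symm

theorem stmt12_general [Fintype ι] [PartialOrder ι] [Field F] [Fintype F] {k : ι → ℕ}
    (hk : ∀ i, 0 < k i)
    (w : F → ℕ)
    (hw0 : ∀ a : F, w a = 0 ↔ a = 0)
    (T : (∀ i, Fin (k i) → F) →ₗ[F] (∀ i, Fin (k i) → F))
    (hT : ∀ u : ∀ i, Fin (k i) → F, omegaW w (T u) = omegaW w u) :
    ∃ φ : ι ≃ ι,
      (∀ a b : ι, a ≤ b ↔ φ a ≤ φ b) ∧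
      (∀ i, k (φ i) = k i) ∧
      ∀ (i : ι) (v : ∀ i, Fin (k i) → F), suppB v ⊆ {i} → v ≠ 0 →
        idealOf (T v) = pIdeal (φ i) := by
  have hT_inj : Function.Injective T := fun a b hab => by
    rw [← sub_eq_zero, ← omegaW_eq_zero_iff hw0, ← hT, map_sub, hab, sub_self,
      omegaW_eq_zero_iff hw0]
  let E := LinearEquiv.ofBijective T ⟨hT_inj, LinearMap.injective_iff_surjective.1 hT_inj⟩
  have hE : ∀ u, omegaW w (E u) = omegaW w u := hT
  choose φ₀ hφ₀ using exists_map_supported_pIdeal_eq hk hw0 hE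
  have hφ₀_le : ∀ a b, a ≤ b ↔ φ₀ a ≤ φ₀ b := fun a b => by
    rw [← supported_pIdeal_le_iff hk (F := F), ← supported_pIdeal_le_iff hk (F := F), ← hφ₀, ← hφ₀,
      Submodule.map_le_map_iff_of_injective E.injective]
  let φ := Equiv.ofBijective φ₀ (Finite.injective_iff_bijective.1 fun a b hab =>
    le_antisymm ((hφ₀_le a b).2 hab.le) ((hφ₀_le b a).2 hab.ge))
  have hideal : ∀ i v, suppB v ⊆ {i} → v ≠ 0 → idealOf (T v) = pIdeal (φ i) :=
    fun i _ => idealOf_apply_eq_pIdeal hk hw0 hE (hφ₀ i)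
  exact ⟨φ, hφ₀_le, eq_of_forall_le_comp_equiv φ fun i => le_of_idealOf_eq_pIdeal (hideal i),
    hideal⟩

/-- The map `η_T`, sending `i` to the maximum of the principal ideal
`I_{T v_i}^P` (for any nonzero `v_i ∈ V_i`), is a `(P,π)`-automorphism. -/
theorem stmt12 [Fintype ι] [PartialOrder ι] [Field F] [Fintype F] {k : ι → ℕ}
    (hk : ∀ i, 0 < k i)
    (w : F → ℕ)
    (hw0 : ∀ a : F, w a = 0 ↔ a = 0)
    (hwneg : ∀ a : F, w (-a) = w a)
    (hwadd : ∀ a b : F, w (a + b) ≤ w a + w b)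
    (T : (∀ i, Fin (k i) → F) →ₗ[F] (∀ i, Fin (k i) → F))
    (hT : ∀ u : ∀ i, Fin (k i) → F, omegaW w (T u) = omegaW w u) :
    ∃ φ : ι ≃ ι,
      (∀ a b : ι, a ≤ b ↔ φ a ≤ φ b) ∧
      (∀ i, k (φ i) = k i) ∧
      ∀ (i : ι) (v : ∀ i, Fin (k i) → F), suppB v ⊆ {i} → v ≠ 0 →
        idealOf (T v) = pIdeal (φ i) :=
  stmt12_general hk w hw0 T hT
end
end
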